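/- arXiv:1908.07867 — 5 statements merged into one kernel-verified Lean document; each statement's English description precedes it below -/
import Mathlib

section
/- Let F be a smooth function of (x,y) and let an affine transformation have linear part with entries a,b,c,k,l,m,p,q,r and determinant δ ≠ 0. Suppose the graph {u = F(x,y)} is mapped to a graph {v = G(s,t)}, and set Λ := (a + c·F_x)(l + m·F_y) − (b + c·F_y)(k + m·F_x) ≠ 0. Then the Hessian determinants transform by G_ss·G_tt − G_st² = (δ²/Λ⁴)·(F_xx·F_yy − F_xy²). -/
/-- Partial derivative in the first variable. -/
noncomputable def pdx (F : ℝ × ℝ → ℝ) : ℝ × ℝ → ℝ :=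
  fun p => deriv (fun x => F (x, p.2)) p.1

/-- Partial derivative in the second variable. -/
noncomputable def pdy (F : ℝ × ℝ → ℝ) : ℝ × ℝ → ℝ :=
  fun p => deriv (fun y => F (p.1, y)) p.2

section aux

variable {H : ℝ × ℝ → ℝ}

lemma pdx_eq (hH : ContDiff ℝ (⊤ : ℕ∞) H) (z : ℝ × ℝ) : pdx H z = fderiv ℝ H z (1, 0) := by
  have h1 : HasDerivAt (fun x : ℝ => (x, z.2)) ((1 : ℝ), (0 : ℝ)) z.1 := by
    simpa using (hasDerivAt_id z.1).prodMk (hasDerivAt_const z.1 z.2)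
  have h2 := ((hH.differentiable (by simp) (z.1, z.2)).hasFDerivAt).comp_hasDerivAt z.1 h1
  simpa [pdx, Function.comp_def] using h2.deriv

lemma pdy_eq (hH : ContDiff ℝ (⊤ : ℕ∞) H) (z : ℝ × ℝ) : pdy H z = fderiv ℝ H z (0, 1) := by
  have h1 : HasDerivAt (fun y : ℝ => (z.1, y)) ((0 : ℝ), (1 : ℝ)) z.2 := by
    simpa using (hasDerivAt_const z.2 z.1).prodMk (hasDerivAt_id z.2)
  have h2 := ((hH.differentiable (by simp) (z.1, z.2)).hasFDerivAt).comp_hasDerivAt z.2 h1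
  simpa [pdy, Function.comp_def] using h2.deriv

lemma contDiff_pdx (hH : ContDiff ℝ (⊤ : ℕ∞) H) : ContDiff ℝ (⊤ : ℕ∞) (pdx H) := by
  have : pdx H = fun z => fderiv ℝ H z (1, 0) := funext (pdx_eq hH)
  rw [this]
  exact (hH.fderiv_right (by simp)).clm_apply contDiff_const

lemma contDiff_pdy (hH : ContDiff ℝ (⊤ : ℕ∞) H) : ContDiff ℝ (⊤ : ℕ∞) (pdy H) := by
  have : pdy H = fun z => fderiv ℝ H z (0, 1) := funext (pdy_eq hH)
  rw [this]
  exact (hH.fderiv_right (by simp)).clm_apply contDiff_const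

lemma hasDerivAt_comp2 (hH : ContDiff ℝ (⊤ : ℕ∞) H) {f g : ℝ → ℝ} {f' g' t : ℝ}
    (hf : HasDerivAt f f' t) (hg : HasDerivAt g g' t) :
    HasDerivAt (fun u => H (f u, g u))
      (pdx H (f t, g t) * f' + pdy H (f t, g t) * g') t := by
  have h2 := ((hH.differentiable (by simp) (f t, g t)).hasFDerivAt).comp_hasDerivAt t (hf.prodMk hg)
  refine h2.congr_deriv ?_
  have hv : ((f', g') : ℝ × ℝ) = f' • ((1 : ℝ), (0 : ℝ)) + g' • ((0 : ℝ), (1 : ℝ)) := by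
    simp [Prod.ext_iff]
  rw [pdx_eq hH, pdy_eq hH, hv, map_add, map_smul, map_smul]
  simp [smul_eq_mul, mul_comm]

lemma pdx_pdy_symm (hH : ContDiff ℝ (⊤ : ℕ∞) H) (z : ℝ × ℝ) :
    pdx (pdy H) z = pdy (pdx H) z := by
  have hsym : IsSymmSndFDerivAt ℝ H z :=
    hH.contDiffAt.isSymmSndFDerivAt (by rw [minSmoothness_of_isRCLikeNormedField]; exact WithTop.coe_le_coe.mpr (le_top : (2 : ℕ∞) ≤ ⊤))
  have hd : DifferentiableAt ℝ (fderiv ℝ H) z :=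
    ((hH.fderiv_right (m := (⊤ : ℕ∞)) (by simp)).differentiable (by simp)) z
  have e1 : pdy H = fun w => fderiv ℝ H w (0, 1) := funext (pdy_eq hH)
  have e2 : pdx H = fun w => fderiv ℝ H w (1, 0) := funext (pdx_eq hH)
  rw [pdx_eq (contDiff_pdy hH) z, pdy_eq (contDiff_pdx hH) z, e1, e2,
    fderiv_clm_apply hd (differentiableAt_const _),
    fderiv_clm_apply hd (differentiableAt_const _)]
  simp only [fderiv_const, fderiv_fun_const, Pi.zero_apply, ContinuousLinearMap.comp_zero, zero_add,
    ContinuousLinearMap.add_apply, ContinuousLinearMap.flip_apply]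
  exact hsym _ _

lemma hasDerivAt_slice_x (hH : ContDiff ℝ (⊤ : ℕ∞) H) (X Y : ℝ) :
    HasDerivAt (fun x' => H (x', Y)) (pdx H (X, Y)) X := by
  simpa using hasDerivAt_comp2 hH (hasDerivAt_id X) (hasDerivAt_const X Y)

lemma hasDerivAt_slice_y (hH : ContDiff ℝ (⊤ : ℕ∞) H) (X Y : ℝ) :
    HasDerivAt (fun y' => H (X, y')) (pdy H (X, Y)) Y := by
  simpa using hasDerivAt_comp2 hH (hasDerivAt_const Y X) (hasDerivAt_id Y)

lemma hasDerivAt_affine_x (hH : ContDiff ℝ (⊤ : ℕ∞) H) (c₁ c₂ c₃ c₄ X Y : ℝ) :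
    HasDerivAt (fun x' => c₁ * x' + c₂ * Y + c₃ * H (x', Y) + c₄)
      (c₁ + c₃ * pdx H (X, Y)) X := by
  have h := ((((hasDerivAt_id X).const_mul c₁).add_const (c₂ * Y)).add
    ((hasDerivAt_slice_x hH X Y).const_mul c₃)).add_const c₄
  refine h.congr_deriv ?_
  ring

lemma hasDerivAt_affine_y (hH : ContDiff ℝ (⊤ : ℕ∞) H) (c₁ c₂ c₃ c₄ X Y : ℝ) :
    HasDerivAt (fun y' => c₁ * X + c₂ * y' + c₃ * H (X, y') + c₄)
      (c₂ + c₃ * pdy H (X, Y)) Y := by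
  have h := ((((hasDerivAt_id Y).const_mul c₂).const_add (c₁ * X)).add
    ((hasDerivAt_slice_y hH X Y).const_mul c₃)).add_const c₄
  refine h.congr_deriv ?_
  ring

end aux

/-- Transformation rule for the Hessian determinant of a graphed surface
under an affine transformation of `ℝ³`. -/
theorem hessian_determinant_transform
    (F G : ℝ × ℝ → ℝ) (hF : ContDiff ℝ (⊤ : ℕ∞) F) (hG : ContDiff ℝ (⊤ : ℕ∞) G)
    (a b c d k l m n p q r s₀ : ℝ)
    (hδ : a * (l * r - m * q) - b * (k * r - m * p) + c * (k * q - l * p) ≠ 0)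
    (hfund : ∀ x y : ℝ,
      p * x + q * y + r * F (x, y) + s₀
        = G (a * x + b * y + c * F (x, y) + d, k * x + l * y + m * F (x, y) + n))
    (x y : ℝ)
    (hΛ : (a + c * pdx F (x, y)) * (l + m * pdy F (x, y))
        - (b + c * pdy F (x, y)) * (k + m * pdx F (x, y)) ≠ 0) :
    let δ := a * (l * r - m * q) - b * (k * r - m * p) + c * (k * q - l * p)
    let Λ := (a + c * pdx F (x, y)) * (l + m * pdy F (x, y))
        - (b + c * pdy F (x, y)) * (k + m * pdx F (x, y))
    let st : ℝ × ℝ := (a * x + b * y + c * F (x, y) + d, k * x + l * y + m * F (x, y) + n)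
    pdx (pdx G) st * pdy (pdy G) st - (pdy (pdx G) st) ^ 2
      = (δ ^ 2 / Λ ^ 4)
        * (pdx (pdx F) (x, y) * pdy (pdy F) (x, y) - (pdy (pdx F) (x, y)) ^ 2) := by
  intro δ Λ st
  -- first-order equations
  have heq1 : ∀ X Y : ℝ,
      p + r * pdx F (X, Y)
        = pdx G (a * X + b * Y + c * F (X, Y) + d, k * X + l * Y + m * F (X, Y) + n)
            * (a + c * pdx F (X, Y))
          + pdy G (a * X + b * Y + c * F (X, Y) + d, k * X + l * Y + m * F (X, Y) + n)
            * (k + m * pdx F (X, Y)) := by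
    intro X Y
    have hL := hasDerivAt_affine_x hF p q r s₀ X Y
    have hR := hasDerivAt_comp2 hG (hasDerivAt_affine_x hF a b c d X Y)
      (hasDerivAt_affine_x hF k l m n X Y)
    have hfun : (fun x' => p * x' + q * Y + r * F (x', Y) + s₀)
        = fun x' => G (a * x' + b * Y + c * F (x', Y) + d,
            k * x' + l * Y + m * F (x', Y) + n) :=
      funext fun x' => hfund x' Y
    rw [← hfun] at hR
    exact hL.unique hR
  have heq2 : ∀ X Y : ℝ,
      q + r * pdy F (X, Y)
        = pdx G (a * X + b * Y + c * F (X, Y) + d, k * X + l * Y + m * F (X, Y) + n)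
            * (b + c * pdy F (X, Y))
          + pdy G (a * X + b * Y + c * F (X, Y) + d, k * X + l * Y + m * F (X, Y) + n)
            * (l + m * pdy F (X, Y)) := by
    intro X Y
    have hL := hasDerivAt_affine_y hF p q r s₀ X Y
    have hR := hasDerivAt_comp2 hG (hasDerivAt_affine_y hF a b c d X Y)
      (hasDerivAt_affine_y hF k l m n X Y)
    have hfun : (fun y' => p * X + q * y' + r * F (X, y') + s₀)
        = fun y' => G (a * X + b * y' + c * F (X, y') + d,
            k * X + l * y' + m * F (X, y') + n) :=
      funext fun y' => hfund X y'
    rw [← hfun] at hR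
    exact hL.unique hR
  -- second-order equations
  have hpdxF := contDiff_pdx hF
  have hpdyF := contDiff_pdy hF
  have hpdxG := contDiff_pdx hG
  have hpdyG := contDiff_pdy hG
  have hSx := hasDerivAt_affine_x hF a b c d x y
  have hTx := hasDerivAt_affine_x hF k l m n x y
  have hSy := hasDerivAt_affine_y hF a b c d x y
  have hTy := hasDerivAt_affine_y hF k l m n x y
  have hA_x : HasDerivAt (fun x' => a + c * pdx F (x', y)) (c * pdx (pdx F) (x, y)) x :=
    ((hasDerivAt_slice_x hpdxF x y).const_mul c).const_add a
  have hK_x : HasDerivAt (fun x' => k + m * pdx F (x', y)) (m * pdx (pdx F) (x, y)) x :=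
    ((hasDerivAt_slice_x hpdxF x y).const_mul m).const_add k
  have hA_y : HasDerivAt (fun y' => a + c * pdx F (x, y')) (c * pdy (pdx F) (x, y)) y :=
    ((hasDerivAt_slice_y hpdxF x y).const_mul c).const_add a
  have hK_y : HasDerivAt (fun y' => k + m * pdx F (x, y')) (m * pdy (pdx F) (x, y)) y :=
    ((hasDerivAt_slice_y hpdxF x y).const_mul m).const_add k
  have hB_y : HasDerivAt (fun y' => b + c * pdy F (x, y')) (c * pdy (pdy F) (x, y)) y :=
    ((hasDerivAt_slice_y hpdyF x y).const_mul c).const_add b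
  have hL_y : HasDerivAt (fun y' => l + m * pdy F (x, y')) (m * pdy (pdy F) (x, y)) y :=
    ((hasDerivAt_slice_y hpdyF x y).const_mul m).const_add l
  have ha := heq1 x y
  have hb := heq2 x y
  have heq3 : r * pdx (pdx F) (x, y)
      = (pdx (pdx G) (a * x + b * y + c * F (x, y) + d, k * x + l * y + m * F (x, y) + n)
            * (a + c * pdx F (x, y))
          + pdy (pdx G) (a * x + b * y + c * F (x, y) + d, k * x + l * y + m * F (x, y) + n)
            * (k + m * pdx F (x, y))) * (a + c * pdx F (x, y))
        + pdx G (a * x + b * y + c * F (x, y) + d, k * x + l * y + m * F (x, y) + n)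
            * (c * pdx (pdx F) (x, y))
        + ((pdx (pdy G) (a * x + b * y + c * F (x, y) + d, k * x + l * y + m * F (x, y) + n)
            * (a + c * pdx F (x, y))
          + pdy (pdy G) (a * x + b * y + c * F (x, y) + d, k * x + l * y + m * F (x, y) + n)
            * (k + m * pdx F (x, y))) * (k + m * pdx F (x, y))
        + pdy G (a * x + b * y + c * F (x, y) + d, k * x + l * y + m * F (x, y) + n)
            * (m * pdx (pdx F) (x, y))) := by
    have hL3 : HasDerivAt (fun x' => p + r * pdx F (x', y)) (r * pdx (pdx F) (x, y)) x :=
      ((hasDerivAt_slice_x hpdxF x y).const_mul r).const_add p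
    have hR3 := (((hasDerivAt_comp2 hpdxG hSx hTx).mul hA_x).add
      ((hasDerivAt_comp2 hpdyG hSx hTx).mul hK_x))
    have hR3' := hR3.congr_of_eventuallyEq
      (Filter.Eventually.of_forall fun x' => heq1 x' y)
    exact hL3.unique hR3'
  have heq4 : r * pdy (pdx F) (x, y)
      = (pdx (pdx G) (a * x + b * y + c * F (x, y) + d, k * x + l * y + m * F (x, y) + n)
            * (b + c * pdy F (x, y))
          + pdy (pdx G) (a * x + b * y + c * F (x, y) + d, k * x + l * y + m * F (x, y) + n)
            * (l + m * pdy F (x, y))) * (a + c * pdx F (x, y))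
        + pdx G (a * x + b * y + c * F (x, y) + d, k * x + l * y + m * F (x, y) + n)
            * (c * pdy (pdx F) (x, y))
        + ((pdx (pdy G) (a * x + b * y + c * F (x, y) + d, k * x + l * y + m * F (x, y) + n)
            * (b + c * pdy F (x, y))
          + pdy (pdy G) (a * x + b * y + c * F (x, y) + d, k * x + l * y + m * F (x, y) + n)
            * (l + m * pdy F (x, y))) * (k + m * pdx F (x, y))
        + pdy G (a * x + b * y + c * F (x, y) + d, k * x + l * y + m * F (x, y) + n)
            * (m * pdy (pdx F) (x, y))) := by
    have hL4 : HasDerivAt (fun y' => p + r * pdx F (x, y')) (r * pdy (pdx F) (x, y)) y :=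
      ((hasDerivAt_slice_y hpdxF x y).const_mul r).const_add p
    have hR4 := (((hasDerivAt_comp2 hpdxG hSy hTy).mul hA_y).add
      ((hasDerivAt_comp2 hpdyG hSy hTy).mul hK_y))
    have hR4' := hR4.congr_of_eventuallyEq
      (Filter.Eventually.of_forall fun y' => heq1 x y')
    exact hL4.unique hR4'
  have heq5 : r * pdy (pdy F) (x, y)
      = (pdx (pdx G) (a * x + b * y + c * F (x, y) + d, k * x + l * y + m * F (x, y) + n)
            * (b + c * pdy F (x, y))
          + pdy (pdx G) (a * x + b * y + c * F (x, y) + d, k * x + l * y + m * F (x, y) + n)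
            * (l + m * pdy F (x, y))) * (b + c * pdy F (x, y))
        + pdx G (a * x + b * y + c * F (x, y) + d, k * x + l * y + m * F (x, y) + n)
            * (c * pdy (pdy F) (x, y))
        + ((pdx (pdy G) (a * x + b * y + c * F (x, y) + d, k * x + l * y + m * F (x, y) + n)
            * (b + c * pdy F (x, y))
          + pdy (pdy G) (a * x + b * y + c * F (x, y) + d, k * x + l * y + m * F (x, y) + n)
            * (l + m * pdy F (x, y))) * (l + m * pdy F (x, y))
        + pdy G (a * x + b * y + c * F (x, y) + d, k * x + l * y + m * F (x, y) + n)
            * (m * pdy (pdy F) (x, y))) := by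
    have hL5 : HasDerivAt (fun y' => q + r * pdy F (x, y')) (r * pdy (pdy F) (x, y)) y :=
      ((hasDerivAt_slice_y hpdyF x y).const_mul r).const_add q
    have hR5 := (((hasDerivAt_comp2 hpdxG hSy hTy).mul hB_y).add
      ((hasDerivAt_comp2 hpdyG hSy hTy).mul hL_y))
    have hR5' := hR5.congr_of_eventuallyEq
      (Filter.Eventually.of_forall fun y' => heq2 x y')
    exact hL5.unique hR5'
  show pdx (pdx G) (a * x + b * y + c * F (x, y) + d, k * x + l * y + m * F (x, y) + n)
        * pdy (pdy G) (a * x + b * y + c * F (x, y) + d, k * x + l * y + m * F (x, y) + n)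
      - pdy (pdx G) (a * x + b * y + c * F (x, y) + d, k * x + l * y + m * F (x, y) + n) ^ 2
    = ((a * (l * r - m * q) - b * (k * r - m * p) + c * (k * q - l * p)) ^ 2
        / ((a + c * pdx F (x, y)) * (l + m * pdy F (x, y))
            - (b + c * pdy F (x, y)) * (k + m * pdx F (x, y))) ^ 4)
      * (pdx (pdx F) (x, y) * pdy (pdy F) (x, y) - pdy (pdx F) (x, y) ^ 2)
  set ST : ℝ × ℝ := (a * x + b * y + c * F (x, y) + d, k * x + l * y + m * F (x, y) + n)
    with hST
  have hsym : pdx (pdy G) ST = pdy (pdx G) ST := pdx_pdy_symm hG ST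
  set Fx := pdx F (x, y) with hFxd
  set Fy := pdy F (x, y) with hFyd
  set Fxx := pdx (pdx F) (x, y) with hFxxd
  set Fxy := pdy (pdx F) (x, y) with hFxyd
  set Fyy := pdy (pdy F) (x, y) with hFyyd
  set Gs := pdx G ST with hGsd
  set Gt := pdy G ST with hGtd
  set Gss := pdx (pdx G) ST with hGssd
  set Gst := pdy (pdx G) ST with hGstd
  set Gts := pdx (pdy G) ST with hGtsd
  set Gtt := pdy (pdy G) ST with hGttd
  have hA2 : ((a + c * Fx) * (l + m * Fy) - (b + c * Fy) * (k + m * Fx))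
        * (r - c * Gs - m * Gt)
      = a * (l * r - m * q) - b * (k * r - m * p) + c * (k * q - l * p) := by
    linear_combination (c * (l + m * Fy) - m * (b + c * Fy)) * ha
      + (m * (a + c * Fx) - c * (k + m * Fx)) * hb
  have h3 : (r - c * Gs - m * Gt) * Fxx
      = Gss * (a + c * Fx) ^ 2 + 2 * Gst * (a + c * Fx) * (k + m * Fx)
        + Gtt * (k + m * Fx) ^ 2 := by
    linear_combination heq3 + ((a + c * Fx) * (k + m * Fx)) * hsym
  have h4 : (r - c * Gs - m * Gt) * Fxy
      = Gss * (a + c * Fx) * (b + c * Fy)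
        + Gst * ((a + c * Fx) * (l + m * Fy) + (b + c * Fy) * (k + m * Fx))
        + Gtt * (k + m * Fx) * (l + m * Fy) := by
    linear_combination heq4 + ((b + c * Fy) * (k + m * Fx)) * hsym
  have h5 : (r - c * Gs - m * Gt) * Fyy
      = Gss * (b + c * Fy) ^ 2 + 2 * Gst * (b + c * Fy) * (l + m * Fy)
        + Gtt * (l + m * Fy) ^ 2 := by
    linear_combination heq5 + ((b + c * Fy) * (l + m * Fy)) * hsym
  have hkey : (r - c * Gs - m * Gt) ^ 2 * (Fxx * Fyy - Fxy ^ 2)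
      = ((a + c * Fx) * (l + m * Fy) - (b + c * Fy) * (k + m * Fx)) ^ 2
        * (Gss * Gtt - Gst ^ 2) := by
    linear_combination ((r - c * Gs - m * Gt) * Fyy) * h3
      + (Gss * (a + c * Fx) ^ 2 + 2 * Gst * (a + c * Fx) * (k + m * Fx)
          + Gtt * (k + m * Fx) ^ 2) * h5
      - ((r - c * Gs - m * Gt) * Fxy + Gss * (a + c * Fx) * (b + c * Fy)
          + Gst * ((a + c * Fx) * (l + m * Fy) + (b + c * Fy) * (k + m * Fx))
          + Gtt * (k + m * Fx) * (l + m * Fy)) * h4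
  rw [div_mul_eq_mul_div, eq_div_iff (pow_ne_zero 4 hΛ)]
  linear_combination
    (-(((a + c * Fx) * (l + m * Fy) - (b + c * Fy) * (k + m * Fx)) ^ 2)) * hkey
    + ((Fxx * Fyy - Fxy ^ 2)
        * (((a + c * Fx) * (l + m * Fy) - (b + c * Fy) * (k + m * Fx))
            * (r - c * Gs - m * Gt)
          + (a * (l * r - m * q) - b * (k * r - m * p) + c * (k * q - l * p)))) * hA2
end

section
/- If F : R² → R is analytic with F_xx ≠ 0 and F_yy ≡ F_xy²/F_xx, then every partial derivative F_{x^j y^k} with k ≥ 2 is a rational function of the derivatives {F_{x^{j'}} : j' ≤ j+k} and {F_{x^{j''} y} : j'' ≤ j+k−1}, with denominator a power of F_xx. -/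
/-!
Where `F_xx ≠ 0`, the functions of the form `P(jet)/F_xx^N`, with `P` a polynomial in the
derivatives `F_{x^i}` (`i ≤ m`) and `F_{x^i y}` (`i < m`), form an algebra `J_m`. A derivative of
such a quotient is, by the chain and quotient rules, again such a quotient, built from the
derivatives of the jet variables. Since `∂x∂y = ∂y∂x`, the derivative `∂x` sends every jet variable
of `J_m` into `J_{m+1}`, and so does `∂y`, except that `∂y F_{x^i y} = F_{x^i yy}` is not a jet
variable: it lies in `J_{i+2}` by differentiating `F_yy = F_xy²/F_xx` in `x` `i` times. Hence
`∂x J_m, ∂y J_m ⊆ J_{m+1}`, and `F_{x^j y^k} ∈ J_{j+k}` follows by induction on `k`.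
-/

open MvPolynomial Set Filter Topology

section Calculus

variable {𝕜 : Type*} [NontriviallyNormedField 𝕜]

theorem HasDerivAt.mvPolynomial_eval {σ : Type*} [Fintype σ] {u : 𝕜 → σ → 𝕜} {u' : σ → 𝕜}
    {t : 𝕜} (hu : ∀ i, HasDerivAt (fun s => u s i) (u' i) t) (P : MvPolynomial σ 𝕜) :
    HasDerivAt (fun s => eval (u s) P) (∑ i, eval (u t) (pderiv i P) * u' i) t := by
  classical
  induction P using MvPolynomial.induction_on with
  | C a => simpa using hasDerivAt_const t a
  | add P Q hP hQ => simpa only [map_add, add_mul, Finset.sum_add_distrib] using hP.fun_add hQ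
  | mul_X P i hP =>
    simp only [map_mul, eval_X]
    refine (hP.fun_mul (hu i)).congr_deriv ?_
    simp only [Derivation.leibniz, pderiv_X, Pi.single_apply, smul_eq_mul, map_add, map_mul, eval_X,
      apply_ite, map_zero, mul_one, mul_zero, add_mul, ite_mul, zero_mul,
      Finset.sum_add_distrib, Finset.sum_ite_eq, Finset.mem_univ, if_true, Finset.sum_mul]
    rw [add_comm]
    exact congrArg _ (Finset.sum_congr rfl fun _ _ => by ring)

variable {E G : Type*} [NormedAddCommGroup E] [NormedSpace 𝕜 E] [NormedAddCommGroup G]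
  [NormedSpace 𝕜 G] {f : E → G} {x : E}

theorem eqOn_lineDeriv_of_eqOn {f g : E → G} {U : Set E} (hU : IsOpen U) (h : EqOn f g U)
    (v : E) : EqOn (fun x => lineDeriv 𝕜 f x v) (fun x => lineDeriv 𝕜 g x v) U := fun _ hx =>
  (Filter.eventuallyEq_of_mem (hU.mem_nhds hx) h).lineDeriv_eq

theorem lineDeriv_eventuallyEq_fderiv [CompleteSpace G] (hf : AnalyticAt 𝕜 f x) (v : E) :
    (fun y => lineDeriv 𝕜 f y v) =ᶠ[𝓝 x] fun y => fderiv 𝕜 f y v := by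
  filter_upwards [hf.eventually_analyticAt] with y hy
  exact hy.differentiableAt.lineDeriv_eq_fderiv

theorem analyticAt_lineDeriv [CompleteSpace G] (hf : AnalyticAt 𝕜 f x) (v : E) :
    AnalyticAt 𝕜 (fun y => lineDeriv 𝕜 f y v) x :=
  ((ContinuousLinearMap.apply 𝕜 G v).analyticAt _ |>.comp hf.fderiv).congr
    (lineDeriv_eventuallyEq_fderiv hf v).symm

theorem lineDeriv_lineDeriv_comm [CompleteSpace G] (hf : AnalyticAt 𝕜 f x) (v w : E) :
    lineDeriv 𝕜 (fun y => lineDeriv 𝕜 f y v) x w =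
      lineDeriv 𝕜 (fun y => lineDeriv 𝕜 f y w) x v := by
  have hsnd (u u' : E) :
      lineDeriv 𝕜 (fun y => lineDeriv 𝕜 f y u) x u' = fderiv 𝕜 (fderiv 𝕜 f) x u' u := by
    rw [(lineDeriv_eventuallyEq_fderiv hf u).lineDeriv_eq]
    have hd := hf.fderiv.differentiableAt.hasFDerivAt
    exact (((ContinuousLinearMap.apply 𝕜 G u).hasFDerivAt.comp x hd).hasLineDerivAt u').lineDeriv
  rw [hsnd, hsnd, hf.contDiffAt.isSymmSndFDerivAt_of_omega.eq]

end Calculus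

section PolyDivPow

variable {α σ τ K : Type*} [Field K]

/-- The functions that agree on `U` with `P(w)/(w · i₀)^N` for a polynomial `P`, written
multiplicatively so that no nonvanishing of `w · i₀` is needed to get a subalgebra. -/
def polyDivPow (U : Set α) (w : α → σ → K) (i₀ : σ) : Subalgebra K (α → K) where
  carrier := {f | ∃ (P : MvPolynomial σ K) (N : ℕ), ∀ x ∈ U, f x * w x i₀ ^ N = eval (w x) P}
  mul_mem' := by
    rintro f g ⟨P, N, hP⟩ ⟨Q, M, hQ⟩
    refine ⟨P * Q, N + M, fun x hx => ?_⟩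
    rw [map_mul, ← hP x hx, ← hQ x hx, Pi.mul_apply, pow_add]
    ring
  add_mem' := by
    rintro f g ⟨P, N, hP⟩ ⟨Q, M, hQ⟩
    refine ⟨P * X i₀ ^ M + Q * X i₀ ^ N, N + M, fun x hx => ?_⟩
    simp only [map_add, map_mul, map_pow, eval_X, ← hP x hx, ← hQ x hx, Pi.add_apply, pow_add]
    ring
  algebraMap_mem' r := ⟨C r, 0, fun x _ => by simp⟩

variable {U : Set α} {w : α → σ → K} {i₀ : σ}

theorem mem_polyDivPow_of_eqOn {f g : α → K} (hg : g ∈ polyDivPow U w i₀) (h : EqOn f g U) :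
    f ∈ polyDivPow U w i₀ := by
  obtain ⟨P, N, hP⟩ := hg
  exact ⟨P, N, fun x hx => by rw [h hx, hP x hx]⟩

theorem eval_mem_polyDivPow (P : MvPolynomial σ K) :
    (fun x => eval (w x) P) ∈ polyDivPow U w i₀ :=
  ⟨P, 0, fun x _ => by simp⟩

theorem coord_mem_polyDivPow (i : σ) : (fun x => w x i) ∈ polyDivPow U w i₀ := by
  simpa using eval_mem_polyDivPow (U := U) (i₀ := i₀) (X i)

theorem inv_mem_polyDivPow (h : ∀ x ∈ U, w x i₀ ≠ 0) :
    (fun x => (w x i₀)⁻¹) ∈ polyDivPow U w i₀ :=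
  ⟨1, 1, fun x hx => by simp [h x hx]⟩

theorem polyDivPow_mono {w' : α → τ → K} {i₁ : τ} (e : σ → τ) (hw : ∀ x i, w' x (e i) = w x i)
    (he : e i₀ = i₁) : polyDivPow U w i₀ ≤ polyDivPow U w' i₁ := by
  rintro f ⟨P, N, hP⟩
  refine ⟨rename e P, N, fun x hx => ?_⟩
  rw [eval_rename, ← he, hw, hP x hx]
  exact congrArg (eval · P) (_root_.funext fun i => (hw x i).symm)

theorem exists_eq_div_of_mem_polyDivPow (h : ∀ x ∈ U, w x i₀ ≠ 0) {f : α → K}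
    (hf : f ∈ polyDivPow U w i₀) :
    ∃ (P : MvPolynomial σ K) (N : ℕ), ∀ x ∈ U, f x = eval (w x) P / w x i₀ ^ N := by
  obtain ⟨P, N, hP⟩ := hf
  exact ⟨P, N, fun x hx => eq_div_of_mul_eq (pow_ne_zero N (h x hx)) (hP x hx)⟩

end PolyDivPow

section LineDerivQuotient

variable {𝕜 E : Type*} [NontriviallyNormedField 𝕜] [NormedAddCommGroup E] [NormedSpace 𝕜 E]
variable {σ τ : Type*} [Fintype σ]

theorem lineDeriv_mem_polyDivPow {U : Set E} (hU : IsOpen U) {w : E → σ → 𝕜} {i₀ : σ}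
    (hw : ∀ i, ∀ x ∈ U, DifferentiableAt 𝕜 (fun y => w y i) x) (h0 : ∀ x ∈ U, w x i₀ ≠ 0)
    {w' : E → τ → 𝕜} {i₁ : τ} (hle : polyDivPow U w i₀ ≤ polyDivPow U w' i₁) (v : E)
    (hD : ∀ i, (fun x => lineDeriv 𝕜 (fun y => w y i) x v) ∈ polyDivPow U w' i₁)
    {f : E → 𝕜} (hf : f ∈ polyDivPow U w i₀) :
    (fun x => lineDeriv 𝕜 f x v) ∈ polyDivPow U w' i₁ := by
  obtain ⟨P, N, hP⟩ := hf
  set D : σ → E → 𝕜 := fun i x => lineDeriv 𝕜 (fun y => w y i) x v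
  set cinv : E → 𝕜 := fun x => (w x i₀)⁻¹
  set evalP : MvPolynomial σ 𝕜 → E → 𝕜 := fun Q x => eval (w x) Q
  have hfg : EqOn f (evalP P * cinv ^ N) U := fun x hx => by
    simp [evalP, cinv, ← hP x hx, h0 x hx]
  set f' := (∑ i, evalP (pderiv i P) * D i) * cinv ^ N
    + evalP P * ((N : E → 𝕜) * cinv ^ (N - 1) * -(D i₀ * cinv ^ 2))
  have hf' : f' ∈ polyDivPow U w' i₁ := by
    have hcinv := hle (inv_mem_polyDivPow h0)
    have hevalP (Q : MvPolynomial σ 𝕜) := hle (eval_mem_polyDivPow (U := U) (i₀ := i₀) Q)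
    exact add_mem (mul_mem (sum_mem fun i _ => mul_mem (hevalP _) (hD i)) (pow_mem hcinv N))
      (mul_mem (hevalP P) (mul_mem (mul_mem (natCast_mem _ N) (pow_mem hcinv _))
        (neg_mem (mul_mem (hD i₀) (pow_mem hcinv 2)))))
  have hderiv : ∀ x ∈ U, HasLineDerivAt 𝕜 (evalP P * cinv ^ N) (f' x) x v := by
    intro x hx
    have hline (i : σ) : HasDerivAt (fun t : 𝕜 => w (x + t • v) i) (D i x) 0 :=
      ((hw i x hx).lineDifferentiableAt).hasLineDerivAt
    have h0' : w (x + (0 : 𝕜) • v) i₀ ≠ 0 := by simpa using h0 x hx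
    have h := (HasDerivAt.mvPolynomial_eval hline P).fun_mul (((hline i₀).fun_inv h0').fun_pow N)
    refine h.congr_deriv ?_
    simp [f', evalP, cinv, Finset.sum_apply, div_eq_mul_inv]
  exact mem_polyDivPow_of_eqOn hf' fun x hx =>
    (eqOn_lineDeriv_of_eqOn hU hfg v hx).trans (hderiv x hx).lineDeriv

end LineDerivQuotient

theorem pdx_eq_lineDeriv (f : ℝ × ℝ → ℝ) : pdx f = fun p => lineDeriv ℝ f p (1, 0) := by
  ext ⟨a, b⟩
  simp [pdx, lineDeriv, deriv_comp_const_add (fun x => f (x, b))]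

theorem pdy_eq_lineDeriv (f : ℝ × ℝ → ℝ) : pdy f = fun p => lineDeriv ℝ f p (0, 1) := by
  ext ⟨a, b⟩
  simp [pdy, lineDeriv, deriv_comp_const_add (fun y => f (a, y))]

theorem analyticAt_pdx {f : ℝ × ℝ → ℝ} {p : ℝ × ℝ} (hf : AnalyticAt ℝ f p) :
    AnalyticAt ℝ (pdx f) p := by
  rw [pdx_eq_lineDeriv]
  exact analyticAt_lineDeriv hf _

theorem analyticAt_pdy {f : ℝ × ℝ → ℝ} {p : ℝ × ℝ} (hf : AnalyticAt ℝ f p) :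
    AnalyticAt ℝ (pdy f) p := by
  rw [pdy_eq_lineDeriv]
  exact analyticAt_lineDeriv hf _

theorem analyticAt_pdx_iterate {f : ℝ × ℝ → ℝ} {p : ℝ × ℝ} (hf : AnalyticAt ℝ f p) (n : ℕ) :
    AnalyticAt ℝ (pdx^[n] f) p := by
  induction n with
  | zero => exact hf
  | succ n ih => exact Function.iterate_succ_apply' pdx n f ▸ analyticAt_pdx ih

theorem pdx_pdy_comm {f : ℝ × ℝ → ℝ} {p : ℝ × ℝ} (hf : AnalyticAt ℝ f p) :
    pdx (pdy f) p = pdy (pdx f) p := by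
  simp only [pdx_eq_lineDeriv, pdy_eq_lineDeriv]
  exact lineDeriv_lineDeriv_comm hf _ _

theorem eqOn_pdy_of_eqOn {f g : ℝ × ℝ → ℝ} {U : Set (ℝ × ℝ)} (hU : IsOpen U) (h : EqOn f g U) :
    EqOn (pdy f) (pdy g) U := by
  simpa only [pdy_eq_lineDeriv] using eqOn_lineDeriv_of_eqOn hU h (0, 1)

noncomputable def jet (F : ℝ × ℝ → ℝ) (m : ℕ) (p : ℝ × ℝ) : Fin (m + 1) ⊕ Fin m → ℝ :=
  Sum.elim (fun i => pdx^[i] F p) (fun i => pdy (pdx^[i] F) p)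

/-- Denominators are powers of the jet variable `.inl 2`, that is, of `F_xx`. -/
noncomputable abbrev jetQuotients (F : ℝ × ℝ → ℝ) (U : Set (ℝ × ℝ)) {m : ℕ} (hm : 2 ≤ m) :
    Subalgebra ℝ (ℝ × ℝ → ℝ) :=
  polyDivPow U (jet F m) (.inl ⟨2, by omega⟩)

section Jets

variable {F : ℝ × ℝ → ℝ} {U : Set (ℝ × ℝ)} {m : ℕ}

theorem analyticAt_jet {p : ℝ × ℝ} (hF : AnalyticAt ℝ F p) (i : Fin (m + 1) ⊕ Fin m) :
    AnalyticAt ℝ (fun q => jet F m q i) p := by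
  cases i with
  | inl i => exact analyticAt_pdx_iterate hF i
  | inr i => exact analyticAt_pdy (analyticAt_pdx_iterate hF i)

theorem jet_mem_jetQuotients (hm : 2 ≤ m) (i : Fin (m + 1) ⊕ Fin m) :
    (fun p => jet F m p i) ∈ jetQuotients F U hm :=
  coord_mem_polyDivPow i

theorem jetQuotients_mono {n : ℕ} (hm : 2 ≤ m) (hmn : m ≤ n) :
    jetQuotients F U hm ≤ jetQuotients F U (hm.trans hmn) :=
  polyDivPow_mono (Sum.map (Fin.castLE (by omega)) (Fin.castLE hmn))
    (fun _ i => by cases i <;> rfl) rfl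

theorem lineDeriv_mem_jetQuotients (hU : IsOpen U) (hF : AnalyticOnNhd ℝ F U)
    (hxx : ∀ p ∈ U, pdx (pdx F) p ≠ 0) (hm : 2 ≤ m) (v : ℝ × ℝ)
    (hD : ∀ i, (fun p => lineDeriv ℝ (fun q => jet F m q i) p v) ∈
      jetQuotients F U (hm.trans m.le_succ))
    {f : ℝ × ℝ → ℝ} (hf : f ∈ jetQuotients F U hm) :
    (fun p => lineDeriv ℝ f p v) ∈ jetQuotients F U (hm.trans m.le_succ) :=
  lineDeriv_mem_polyDivPow (w := jet F m) (i₀ := .inl ⟨2, by omega⟩) hU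
    (fun i p hp => (analyticAt_jet (hF p hp) i).differentiableAt) hxx
    (jetQuotients_mono hm m.le_succ) v hD hf

theorem pdx_mem_jetQuotients (hU : IsOpen U) (hF : AnalyticOnNhd ℝ F U)
    (hxx : ∀ p ∈ U, pdx (pdx F) p ≠ 0) (hm : 2 ≤ m) {f : ℝ × ℝ → ℝ}
    (hf : f ∈ jetQuotients F U hm) : pdx f ∈ jetQuotients F U (hm.trans m.le_succ) := by
  rw [pdx_eq_lineDeriv]
  refine lineDeriv_mem_jetQuotients hU hF hxx hm _ (fun i => ?_) hf
  rw [← pdx_eq_lineDeriv]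
  cases i with
  | inl i =>
    have hi : pdx (pdx^[i] F) = pdx^[i + 1] F := (Function.iterate_succ_apply' pdx i F).symm
    exact hi ▸ jet_mem_jetQuotients (hm.trans m.le_succ) (.inl i.succ)
  | inr i =>
    refine mem_polyDivPow_of_eqOn (jet_mem_jetQuotients (hm.trans m.le_succ) (.inr i.succ))
      fun p hp => ?_
    simp only [jet, Sum.elim_inr, Fin.val_succ, Function.iterate_succ_apply']
    exact pdx_pdy_comm (analyticAt_pdx_iterate (hF p hp) i)

end Jets

section Parabolic

variable {F : ℝ × ℝ → ℝ} {U : Set (ℝ × ℝ)}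

theorem pdy_pdy_pdx_iterate_mem_jetQuotients (hU : IsOpen U) (hF : AnalyticOnNhd ℝ F U)
    (hxx : ∀ p ∈ U, pdx (pdx F) p ≠ 0)
    (hpar : ∀ p ∈ U, pdx (pdx F) p * pdy (pdy F) p - (pdy (pdx F) p) ^ 2 = 0) (i : ℕ) :
    pdy (pdy (pdx^[i] F)) ∈ jetQuotients F U (by omega : 2 ≤ i + 2) := by
  induction i with
  | zero =>
    have hFxy := jet_mem_jetQuotients (F := F) (U := U) (le_refl 2) (.inr 1)
    have hinv := inv_mem_polyDivPow (U := U) (w := jet F 2) (i₀ := .inl 2) hxx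
    refine mem_polyDivPow_of_eqOn (mul_mem (pow_mem hFxy 2) hinv) fun p hp => ?_
    show pdy (pdy F) p = pdy (pdx F) p ^ 2 * (pdx (pdx F) p)⁻¹
    rw [eq_mul_inv_iff_mul_eq₀ (hxx p hp)]
    linear_combination hpar p hp
  | succ i ih =>
    set g := pdx^[i] F
    have hg : AnalyticOnNhd ℝ g U := fun p hp => analyticAt_pdx_iterate (hF p hp) i
    have hcomm : EqOn (pdx (pdy g)) (pdy (pdx g)) U := fun p hp => pdx_pdy_comm (hg p hp)
    have hyy : EqOn (pdy (pdy (pdx g))) (pdx (pdy (pdy g))) U := by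
      intro p hp
      rw [pdx_pdy_comm (analyticAt_pdy (hg p hp))]
      exact (eqOn_pdy_of_eqOn hU hcomm hp).symm
    rw [Function.iterate_succ_apply']
    exact mem_polyDivPow_of_eqOn (pdx_mem_jetQuotients hU hF hxx _ ih) hyy

theorem pdy_mem_jetQuotients (hU : IsOpen U) (hF : AnalyticOnNhd ℝ F U)
    (hxx : ∀ p ∈ U, pdx (pdx F) p ≠ 0)
    (hpar : ∀ p ∈ U, pdx (pdx F) p * pdy (pdy F) p - (pdy (pdx F) p) ^ 2 = 0)
    {m : ℕ} (hm : 2 ≤ m) {f : ℝ × ℝ → ℝ} (hf : f ∈ jetQuotients F U hm) :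
    pdy f ∈ jetQuotients F U (hm.trans m.le_succ) := by
  rw [pdy_eq_lineDeriv]
  refine lineDeriv_mem_jetQuotients hU hF hxx hm _ (fun i => ?_) hf
  rw [← pdy_eq_lineDeriv]
  cases i with
  | inl i => exact jet_mem_jetQuotients (hm.trans m.le_succ) (.inr i)
  | inr i =>
    exact jetQuotients_mono _ (by omega)
      (pdy_pdy_pdx_iterate_mem_jetQuotients hU hF hxx hpar i)

theorem pdy_iterate_pdx_iterate_mem_jetQuotients (hU : IsOpen U) (hF : AnalyticOnNhd ℝ F U)
    (hxx : ∀ p ∈ U, pdx (pdx F) p ≠ 0)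
    (hpar : ∀ p ∈ U, pdx (pdx F) p * pdy (pdy F) p - (pdy (pdx F) p) ^ 2 = 0) (j k : ℕ) :
    pdy^[k + 2] (pdx^[j] F) ∈ jetQuotients F U (by omega : 2 ≤ j + (k + 2)) := by
  induction k with
  | zero => exact pdy_pdy_pdx_iterate_mem_jetQuotients hU hF hxx hpar j
  | succ k ih =>
    rw [Function.iterate_succ_apply']
    exact pdy_mem_jetQuotients hU hF hxx hpar _ ih

end Parabolic

theorem parabolic_jets_rational_general
    (F : ℝ × ℝ → ℝ) (U : Set (ℝ × ℝ)) (hU : IsOpen U)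
    (hF : ∀ p ∈ U, AnalyticAt ℝ F p)
    (hxx : ∀ p ∈ U, pdx (pdx F) p ≠ 0)
    (hpar : ∀ p ∈ U, pdx (pdx F) p * pdy (pdy F) p - (pdy (pdx F) p) ^ 2 = 0)
    (j k : ℕ) :
    ∃ (P : MvPolynomial (Fin (j + k + 1) ⊕ Fin (j + k)) ℝ) (N : ℕ),
      ∀ p ∈ U,
        pdy^[k] (pdx^[j] F) p
          = MvPolynomial.eval
              (Sum.elim (fun i : Fin (j + k + 1) => pdx^[(i : ℕ)] F p)
                (fun i : Fin (j + k) => pdy (pdx^[(i : ℕ)] F) p)) P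
            / (pdx (pdx F) p) ^ N := by
  match k with
  | 0 => exact ⟨X (.inl (Fin.last j)), 0, fun p _ => by simp⟩
  | 1 => exact ⟨X (.inr (Fin.last j)), 0, fun p _ => by simp⟩
  | k + 2 =>
    exact exists_eq_div_of_mem_polyDivPow (w := jet F (j + (k + 2))) (i₀ := .inl ⟨2, by omega⟩)
      hxx (pdy_iterate_pdx_iterate_mem_jetQuotients hU hF hxx hpar j k)

/-- On a parabolic surface (`F_xx ≠ 0` and `F_xx·F_yy − F_xy² ≡ 0`), every
derivative `F_{x^j y^k}` with `k ≥ 2` is a polynomial in the pure derivatives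
`F_{x^{j'}}` (`j' ≤ j+k`) and the mixed derivatives `F_{x^{j''} y}`
(`j'' ≤ j+k−1`), divided by a power of `F_xx`. -/
theorem parabolic_jets_rational
    (F : ℝ × ℝ → ℝ) (U : Set (ℝ × ℝ)) (hU : IsOpen U)
    (hF : ∀ p ∈ U, AnalyticAt ℝ F p)
    (hxx : ∀ p ∈ U, pdx (pdx F) p ≠ 0)
    (hpar : ∀ p ∈ U, pdx (pdx F) p * pdy (pdy F) p - (pdy (pdx F) p) ^ 2 = 0)
    (j k : ℕ) (hk : 2 ≤ k) :
    ∃ (P : MvPolynomial (Fin (j + k + 1) ⊕ Fin (j + k)) ℝ) (N : ℕ),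
      ∀ p ∈ U,
        pdy^[k] (pdx^[j] F) p
          = MvPolynomial.eval
              (Sum.elim (fun i : Fin (j + k + 1) => pdx^[(i : ℕ)] F p)
                (fun i : Fin (j + k) => pdy (pdx^[(i : ℕ)] F) p)) P
            / (pdx (pdx F) p) ^ N :=
  parabolic_jets_rational_general F U hU hF hxx hpar j k
end

section
/- Let a smooth curve u = u(x) in R² with u_xx ≠ 0 be transformed by an affine map x = a·y + b·v + c, u = k·y + l·v + m (with al − bk ≠ 0) into a curve v = G(y). Then F_xx = (al − bk)·G_yy/(a + b·G_y)³ and −5·F_xxx² + 3·F_xx·F_xxxx = ((al−bk)²/(a + b·G_y)⁸)·(−5·G_yyy² + 3·G_yy·G_yyyy), where F denotes the graphing function in the (x,u) coordinates. In particular the vanishing of 3·u_xx·u_xxxx − 5·u_xxx² is an affinely invariant condition on plane curves. -/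
lemma aux_iter {f : ℝ → ℝ} (hf : ContDiff ℝ (⊤ : ℕ∞) f) (n : ℕ) (x : ℝ) :
    HasDerivAt (deriv^[n] f) (deriv^[n+1] f x) x := by
  rw [Function.iterate_succ_apply']
  exact (((hf.of_le (by simp)).iterate_deriv n).differentiable (by simp)).differentiableAt.hasDerivAt

lemma deriv_eq_of_eq {L R : ℝ → ℝ} {dL dR : ℝ} {y : ℝ} (h : ∀ t, L t = R t)
    (hL : HasDerivAt L dL y) (hR : HasDerivAt R dR y) : dL = dR :=
  hL.unique (hR.congr_of_eventuallyEq (Filter.Eventually.of_forall h))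




/-- Transformation of the second derivative and of the relative invariant
`−5u_xxx² + 3u_xx·u_xxxx` of a plane curve under an affine map of the plane
(written in inverse form `x = ay + bv + c`, `u = ky + lv + m`). In
particular the vanishing of `3u_xx·u_xxxx − 5u_xxx²` is affinely invariant. -/
theorem affine_curve_second_and_fourth_order
    (G F : ℝ → ℝ) (hG : ContDiff ℝ (⊤ : ℕ∞) G) (hF : ContDiff ℝ (⊤ : ℕ∞) F)
    (a b c k l m : ℝ) (hdet : a * l - b * k ≠ 0)
    (hden : ∀ y, a + b * deriv G y ≠ 0)
    (hFxx : ∀ x, deriv^[2] F x ≠ 0)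
    (hfund : ∀ y, k * y + l * G y + m = F (a * y + b * G y + c)) :
    ∀ y,
      deriv^[2] F (a * y + b * G y + c)
          = (a * l - b * k) * deriv^[2] G y / (a + b * deriv G y) ^ 3
      ∧ -5 * (deriv^[3] F (a * y + b * G y + c)) ^ 2
          + 3 * deriv^[2] F (a * y + b * G y + c) * deriv^[4] F (a * y + b * G y + c)
          = ((a * l - b * k) ^ 2 / (a + b * deriv G y) ^ 8)
            * (-5 * (deriv^[3] G y) ^ 2 + 3 * deriv^[2] G y * deriv^[4] G y)
      ∧ (3 * deriv^[2] F (a * y + b * G y + c) * deriv^[4] F (a * y + b * G y + c)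
            - 5 * (deriv^[3] F (a * y + b * G y + c)) ^ 2 = 0
          ↔ 3 * deriv^[2] G y * deriv^[4] G y - 5 * (deriv^[3] G y) ^ 2 = 0) := by
  have hG1 : ∀ y, HasDerivAt G (deriv G y) y := fun y =>
    ((hG.differentiable (by simp)) y).hasDerivAt
  have hG2 : ∀ y, HasDerivAt (fun t => deriv G t) (deriv^[2] G y) y := fun y => by
    simpa using aux_iter hG 1 y
  have hG3 : ∀ y, HasDerivAt (fun t => deriv^[2] G t) (deriv^[3] G y) y := fun y =>
    aux_iter hG 2 y
  have hG4 : ∀ y, HasDerivAt (fun t => deriv^[3] G t) (deriv^[4] G y) y := fun y =>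
    aux_iter hG 3 y
  have hφ : ∀ y, HasDerivAt (fun t => a * t + b * G t + c) (a + b * deriv G y) y := fun y => by
    simpa using (((hasDerivAt_id y).const_mul a).add ((hG1 y).const_mul b)).add_const c
  have hp : ∀ y, HasDerivAt (fun t => a + b * deriv G t) (b * deriv^[2] G y) y := fun y =>
    ((hG2 y).const_mul b).const_add a
  have hcomp : ∀ (n : ℕ) (y : ℝ),
      HasDerivAt (fun t => deriv^[n] F (a * t + b * G t + c))
        (deriv^[n+1] F (a * y + b * G y + c) * (a + b * deriv G y)) y := fun n y =>
    (aux_iter hF n _).comp y (hφ y)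
  have hc1 : ∀ y, HasDerivAt (fun t => deriv F (a * t + b * G t + c))
      (deriv^[2] F (a * y + b * G y + c) * (a + b * deriv G y)) y := fun y => by
    simpa using hcomp 1 y
  have hc2 : ∀ y, HasDerivAt (fun t => deriv^[2] F (a * t + b * G t + c))
      (deriv^[3] F (a * y + b * G y + c) * (a + b * deriv G y)) y := fun y => hcomp 2 y
  have hc3 : ∀ y, HasDerivAt (fun t => deriv^[3] F (a * t + b * G t + c))
      (deriv^[4] F (a * y + b * G y + c) * (a + b * deriv G y)) y := fun y => hcomp 3 y
  have E1 : ∀ y, k + l * deriv G y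
      = deriv F (a * y + b * G y + c) * (a + b * deriv G y) := by
    intro y
    have hL : HasDerivAt (fun t => k * t + l * G t + m) (k + l * deriv G y) y := by
      simpa using (((hasDerivAt_id y).const_mul k).add ((hG1 y).const_mul l)).add_const m
    exact deriv_eq_of_eq hfund hL (by simpa using hcomp 0 y)
  have E2 := fun y => deriv_eq_of_eq E1
    (((hG2 y).const_mul l).const_add k)
    ((hc1 y).mul (hp y))
  have E3 := fun y => deriv_eq_of_eq E2
    ((hG3 y).const_mul l)
    ((((hc2 y).mul (hp y)).mul (hp y)).add ((hc1 y).mul ((hG3 y).const_mul b)))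
  have E4 := fun y => deriv_eq_of_eq E3
    ((hG4 y).const_mul l)
    (((((((hc3 y).mul (hp y)).mul (hp y)).add ((hc2 y).mul ((hG3 y).const_mul b))).mul (hp y)).add
      (((hc2 y).mul (hp y)).mul ((hG3 y).const_mul b))).add
        ((((hc2 y).mul (hp y)).mul ((hG3 y).const_mul b)).add
          ((hc1 y).mul ((hG4 y).const_mul b))))

  intro y
  have hpne : (a + b * deriv G y) ≠ 0 := hden y
  have hA1 : deriv F (a * y + b * G y + c) * (a + b * deriv G y) = k + l * deriv G y := by
    linear_combination (-1 : ℝ) * E1 y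
  have hA2 : deriv^[2] F (a * y + b * G y + c) * (a + b * deriv G y) ^ 3
      = (a * l - b * k) * deriv^[2] G y := by
    linear_combination (-(a + b * deriv G y)) * E2 y + (b * deriv^[2] G y) * E1 y
  have hA3 : deriv^[3] F (a * y + b * G y + c) * (a + b * deriv G y) ^ 5
      = (a * l - b * k) * (deriv^[3] G y * (a + b * deriv G y) - 3 * b * (deriv^[2] G y) ^ 2) := by
    linear_combination (norm := (simp only [Pi.mul_apply, Pi.add_apply]; ring1)) (-(a + b * deriv G y) ^ 2) * E3 y
      + (-3 * b * deriv^[2] G y) * hA2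
      + (-(b * deriv^[3] G y * (a + b * deriv G y))) * hA1
  have hA4 : deriv^[4] F (a * y + b * G y + c) * (a + b * deriv G y) ^ 7
      = (a * l - b * k) * (deriv^[4] G y * (a + b * deriv G y) ^ 2
          - 10 * b * deriv^[2] G y * deriv^[3] G y * (a + b * deriv G y)
          + 15 * b ^ 2 * (deriv^[2] G y) ^ 3) := by
    linear_combination (norm := (simp only [Pi.mul_apply, Pi.add_apply]; ring1)) (-(a + b * deriv G y) ^ 3) * E4 y
      + (-6 * b * deriv^[2] G y) * hA3
      + (-(3 * b ^ 2 * (deriv^[2] G y) ^ 2 + 4 * b * deriv^[3] G y * (a + b * deriv G y))) * hA2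
      + (-(b * deriv^[4] G y * (a + b * deriv G y) ^ 2)) * hA1
  have key : (-5 * (deriv^[3] F (a * y + b * G y + c)) ^ 2
        + 3 * deriv^[2] F (a * y + b * G y + c) * deriv^[4] F (a * y + b * G y + c))
        * (a + b * deriv G y) ^ 10
      = (a * l - b * k) ^ 2 * (-5 * (deriv^[3] G y) ^ 2 + 3 * deriv^[2] G y * deriv^[4] G y)
        * (a + b * deriv G y) ^ 2 := by
    linear_combination
      (-5 * (deriv^[3] F (a * y + b * G y + c) * (a + b * deriv G y) ^ 5
        + (a * l - b * k) * (deriv^[3] G y * (a + b * deriv G y)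
            - 3 * b * (deriv^[2] G y) ^ 2))) * hA3
      + (3 * deriv^[4] F (a * y + b * G y + c) * (a + b * deriv G y) ^ 7) * hA2
      + (3 * (a * l - b * k) * deriv^[2] G y) * hA4
  have goal1 : deriv^[2] F (a * y + b * G y + c)
      = (a * l - b * k) * deriv^[2] G y / (a + b * deriv G y) ^ 3 := by
    rw [eq_div_iff (pow_ne_zero 3 hpne)]
    linear_combination hA2
  have goal2 : -5 * (deriv^[3] F (a * y + b * G y + c)) ^ 2
        + 3 * deriv^[2] F (a * y + b * G y + c) * deriv^[4] F (a * y + b * G y + c)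
      = ((a * l - b * k) ^ 2 / (a + b * deriv G y) ^ 8)
        * (-5 * (deriv^[3] G y) ^ 2 + 3 * deriv^[2] G y * deriv^[4] G y) := by
    rw [div_mul_eq_mul_div, eq_div_iff (pow_ne_zero 8 hpne)]
    exact mul_right_cancel₀ (pow_ne_zero 2 hpne) (by linear_combination key)
  refine ⟨goal1, goal2, ?_, ?_⟩
  · intro h
    have hz : ((a * l - b * k) ^ 2 / (a + b * deriv G y) ^ 8)
        * (-5 * (deriv^[3] G y) ^ 2 + 3 * deriv^[2] G y * deriv^[4] G y) = 0 := by
      linear_combination h - goal2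
    rcases mul_eq_zero.mp hz with h' | h'
    · exact absurd h' (div_ne_zero (pow_ne_zero 2 hdet) (pow_ne_zero 8 hpne))
    · linear_combination h'
  · intro h
    linear_combination goal2
      + ((a * l - b * k) ^ 2 / (a + b * deriv G y) ^ 8) * h
end

section
/- Let H(q) := q₂₀·q₀₂ − q₁₁² be the Hessian function on the 2nd-order jet space of surfaces in R³, with jet coordinates (x, y, u, u₁₀, u₀₁, u₂₀, u₁₁, u₀₂). For the six prolonged infinitesimal SA₃(R)-generators v₁ = x∂_x − u∂_u, v₂ = y∂_y − u∂_u, v₃ = y∂_x, v₄ = u∂_x, v₅ = x∂_y, v₆ = u∂_y, the Lie derivatives of H along their 2nd prolongations satisfy v_σ^{(2)}(H) = λ_σ·H with multipliers λ₁ = −4, λ₂ = −4, λ₃ = 0, λ₄ = −4u₁₀, λ₅ = 0, λ₆ = −4u₀₁. In particular each v_σ^{(2)} is tangent to the hypersurface {H = 0}. -/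
/-- The prolongation coefficient `Φ^{j,k} = D_x^j D_y^k (φ − ξ u₁₀ − η u₀₁)
+ ξ u_{j+1,k} + η u_{j,k+1}` of the vector field `ξ∂_x + η∂_y + φ∂_u`, pulled
back along a surface `u = F(x,y)` (so that total derivatives become actual
partial derivatives). -/
noncomputable def Phi (ξ η φ F : ℝ × ℝ → ℝ) (j k : ℕ) : ℝ × ℝ → ℝ :=
  fun p =>
    pdx^[j] (pdy^[k] (fun q => φ q - ξ q * pdx F q - η q * pdy F q)) p
      + ξ p * pdx^[j + 1] (pdy^[k] F) p + η p * pdx^[j] (pdy^[k + 1] F) p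

section kit
variable {f g : ℝ × ℝ → ℝ} {p : ℝ × ℝ}

lemma sliceX_diff (hf : ContDiff ℝ (⊤ : ℕ∞) f) (p : ℝ × ℝ) :
    DifferentiableAt ℝ (fun x => f (x, p.2)) p.1 :=
  ((hf.comp (contDiff_id.prodMk contDiff_const)).differentiable (by simp)).differentiableAt

lemma sliceY_diff (hf : ContDiff ℝ (⊤ : ℕ∞) f) (p : ℝ × ℝ) :
    DifferentiableAt ℝ (fun y => f (p.1, y)) p.2 :=
  ((hf.comp (contDiff_const.prodMk contDiff_id)).differentiable (by simp)).differentiableAt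

lemma pdx_eq_s15 (hf : DifferentiableAt ℝ f p) : pdx f p = fderiv ℝ f p (1, 0) := by
  have h1 : HasFDerivAt (fun x : ℝ => (x, p.2)) ((ContinuousLinearMap.id ℝ ℝ).prod 0) p.1 :=
    (hasFDerivAt_id p.1).prodMk (hasFDerivAt_const _ _)
  have h2 : HasFDerivAt (fun x : ℝ => f (x, p.2))
      ((fderiv ℝ f p).comp ((ContinuousLinearMap.id ℝ ℝ).prod 0)) p.1 := by
    have := hf.hasFDerivAt.comp p.1 (by simpa using h1)
    exact this
  simpa [pdx] using h2.hasDerivAt.deriv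

lemma pdy_eq_s15 (hf : DifferentiableAt ℝ f p) : pdy f p = fderiv ℝ f p (0, 1) := by
  have h1 : HasFDerivAt (fun y : ℝ => (p.1, y)) ((0 : ℝ →L[ℝ] ℝ).prod (ContinuousLinearMap.id ℝ ℝ)) p.2 :=
    (hasFDerivAt_const _ _).prodMk (hasFDerivAt_id p.2)
  have h2 : HasFDerivAt (fun y : ℝ => f (p.1, y))
      ((fderiv ℝ f p).comp ((0 : ℝ →L[ℝ] ℝ).prod (ContinuousLinearMap.id ℝ ℝ))) p.2 := by
    have := hf.hasFDerivAt.comp p.2 (by simpa using h1)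
    exact this
  simpa [pdy] using h2.hasDerivAt.deriv

@[fun_prop]
lemma contDiff_pdx_s15 (hf : ContDiff ℝ (⊤ : ℕ∞) f) : ContDiff ℝ (⊤ : ℕ∞) (pdx f) := by
  have : pdx f = fun p => fderiv ℝ f p (1, 0) :=
    funext fun p => pdx_eq_s15 ((hf.differentiable (by simp)).differentiableAt)
  rw [this]
  exact (hf.fderiv_right (by simp)).clm_apply contDiff_const

@[fun_prop]
lemma contDiff_pdy_s15 (hf : ContDiff ℝ (⊤ : ℕ∞) f) : ContDiff ℝ (⊤ : ℕ∞) (pdy f) := by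
  have : pdy f = fun p => fderiv ℝ f p (0, 1) :=
    funext fun p => pdy_eq_s15 ((hf.differentiable (by simp)).differentiableAt)
  rw [this]
  exact (hf.fderiv_right (by simp)).clm_apply contDiff_const

lemma pdx_sub (hf : ContDiff ℝ (⊤ : ℕ∞) f) (hg : ContDiff ℝ (⊤ : ℕ∞) g) :
    pdx (fun q => f q - g q) = fun q => pdx f q - pdx g q := by
  funext p
  exact deriv_sub (sliceX_diff hf p) (sliceX_diff hg p)

lemma pdy_sub (hf : ContDiff ℝ (⊤ : ℕ∞) f) (hg : ContDiff ℝ (⊤ : ℕ∞) g) :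
    pdy (fun q => f q - g q) = fun q => pdy f q - pdy g q := by
  funext p
  exact deriv_sub (sliceY_diff hf p) (sliceY_diff hg p)

lemma pdx_mul (hf : ContDiff ℝ (⊤ : ℕ∞) f) (hg : ContDiff ℝ (⊤ : ℕ∞) g) :
    pdx (fun q => f q * g q) = fun q => pdx f q * g q + f q * pdx g q := by
  funext p
  exact deriv_mul (sliceX_diff hf p) (sliceX_diff hg p)

lemma pdy_mul (hf : ContDiff ℝ (⊤ : ℕ∞) f) (hg : ContDiff ℝ (⊤ : ℕ∞) g) :
    pdy (fun q => f q * g q) = fun q => pdy f q * g q + f q * pdy g q := by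
  funext p
  exact deriv_mul (sliceY_diff hf p) (sliceY_diff hg p)

lemma pdx_neg : pdx (fun q => -f q) = fun q => -pdx f q := by
  funext p; exact deriv.neg

lemma pdy_neg : pdy (fun q => -f q) = fun q => -pdy f q := by
  funext p; exact deriv.neg

lemma pdx_fst : pdx (fun q : ℝ × ℝ => q.1) = fun _ => 1 := by
  funext p; simp [pdx]

lemma pdx_snd : pdx (fun q : ℝ × ℝ => q.2) = fun _ => 0 := by
  funext p; simp [pdx]

lemma pdy_fst : pdy (fun q : ℝ × ℝ => q.1) = fun _ => 0 := by
  funext p; simp [pdy]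

lemma pdy_snd : pdy (fun q : ℝ × ℝ => q.2) = fun _ => 1 := by
  funext p; simp [pdy]

lemma pdx_pdy (hf : ContDiff ℝ (⊤ : ℕ∞) f) : pdx (pdy f) = pdy (pdx f) := by
  have hd := (hf.differentiable (by simp))
  have hfd : ContDiff ℝ (⊤ : ℕ∞) (fderiv ℝ f) := hf.fderiv_right (by simp)
  have hpy : pdy f = fun q => fderiv ℝ f q (0, 1) := funext fun q => pdy_eq_s15 (hd q)
  have hpx : pdx f = fun q => fderiv ℝ f q (1, 0) := funext fun q => pdx_eq_s15 (hd q)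
  funext p
  have hsymm := hf.contDiffAt.isSymmSndFDerivAt (n := (⊤ : ℕ∞)) (by rw [minSmoothness_of_isRCLikeNormedField]; exact WithTop.coe_le_coe.mpr (le_top : (2 : ℕ∞) ≤ ⊤)) (x := p)
  have hfd' : Differentiable ℝ (fderiv ℝ f) := hfd.differentiable (by simp)
  have e1 : pdx (pdy f) p = fderiv ℝ (fderiv ℝ f) p (1, 0) (0, 1) := by
    have h := pdx_eq_s15 (((contDiff_pdy_s15 hf).differentiable (by simp)) p)
    rw [h, hpy, fderiv_clm_apply (hfd' p) (differentiableAt_const _)]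
    simp
  have e2 : pdy (pdx f) p = fderiv ℝ (fderiv ℝ f) p (0, 1) (1, 0) := by
    have h := pdy_eq_s15 (((contDiff_pdx_s15 hf).differentiable (by simp)) p)
    rw [h, hpx, fderiv_clm_apply (hfd' p) (differentiableAt_const _)]
    simp
  rw [e1, e2, hsymm (1, 0) (0, 1)]
end kit

section kit2
variable (ξ η φ F : ℝ × ℝ → ℝ) (p : ℝ × ℝ)

lemma Phi20 : Phi ξ η φ F 2 0 p =
    pdx (pdx (fun q => φ q - ξ q * pdx F q - η q * pdy F q)) p
      + ξ p * pdx (pdx (pdx F)) p + η p * pdx (pdx (pdy F)) p := rfl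

lemma Phi11 : Phi ξ η φ F 1 1 p =
    pdx (pdy (fun q => φ q - ξ q * pdx F q - η q * pdy F q)) p
      + ξ p * pdx (pdx (pdy F)) p + η p * pdx (pdy (pdy F)) p := rfl

lemma Phi02 : Phi ξ η φ F 0 2 p =
    pdy (pdy (fun q => φ q - ξ q * pdx F q - η q * pdy F q)) p
      + ξ p * pdx (pdy (pdy F)) p + η p * pdy (pdy (pdy F)) p := rfl
end kit2

lemma pdx_add {f g : ℝ × ℝ → ℝ} (hf : ContDiff ℝ (⊤ : ℕ∞) f) (hg : ContDiff ℝ (⊤ : ℕ∞) g) :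
    pdx (fun q => f q + g q) = fun q => pdx f q + pdx g q := by
  funext p
  exact deriv_add (sliceX_diff hf p) (sliceX_diff hg p)

lemma pdy_add {f g : ℝ × ℝ → ℝ} (hf : ContDiff ℝ (⊤ : ℕ∞) f) (hg : ContDiff ℝ (⊤ : ℕ∞) g) :
    pdy (fun q => f q + g q) = fun q => pdy f q + pdy g q := by
  funext p
  exact deriv_add (sliceY_diff hf p) (sliceY_diff hg p)

/-- The Hessian function `H = u₂₀u₀₂ − u₁₁²` is a relative invariant of
infinitesimal weight for the six non-translational generators of `SA₃(ℝ)`: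
`v_σ⁽²⁾(H) = λ_σ·H` with `λ₁ = λ₂ = −4`, `λ₃ = λ₅ = 0`, `λ₄ = −4u₁₀`,
`λ₆ = −4u₀₁`; in particular each prolonged field is tangent to `{H = 0}`. -/
theorem hessian_relative_invariant_infinitesimal
    (F : ℝ × ℝ → ℝ) (hF : ContDiff ℝ (⊤ : ℕ∞) F) :
    ∀ p : ℝ × ℝ,
      let H := pdx (pdx F) p * pdy (pdy F) p - (pdy (pdx F) p) ^ 2
      let L := fun (ξ η φ : ℝ × ℝ → ℝ) =>
        Phi ξ η φ F 2 0 p * pdy (pdy F) p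
          - 2 * Phi ξ η φ F 1 1 p * pdy (pdx F) p
          + Phi ξ η φ F 0 2 p * pdx (pdx F) p
      -- v₁ = x∂_x − u∂_u
      L (fun q => q.1) (fun _ => 0) (fun q => -F q) = -4 * H
      -- v₂ = y∂_y − u∂_u
      ∧ L (fun _ => 0) (fun q => q.2) (fun q => -F q) = -4 * H
      -- v₃ = y∂_x
      ∧ L (fun q => q.2) (fun _ => 0) (fun _ => 0) = 0 * H
      -- v₄ = u∂_x
      ∧ L F (fun _ => 0) (fun _ => 0) = -4 * pdx F p * H
      -- v₅ = x∂_y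
      ∧ L (fun _ => 0) (fun q => q.1) (fun _ => 0) = 0 * H
      -- v₆ = u∂_y
      ∧ L (fun _ => 0) F (fun _ => 0) = -4 * pdy F p * H := by
  intro p
  refine ⟨?_, ?_, ?_, ?_, ?_, ?_⟩ <;>
  · simp only [Phi20, Phi11, Phi02]
    simp (disch := fun_prop) only [pdx_add, pdx_sub, pdx_mul, pdx_neg, pdx_fst, pdx_snd,
      pdy_add, pdy_sub, pdy_mul, pdy_neg, pdy_fst, pdy_snd, pdx_pdy,
      zero_mul, mul_zero, sub_zero, zero_sub, add_zero, zero_add, one_mul, mul_one, neg_neg]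
    ring
end

section
/- Let a cone in R³ with apex A = (0,1,0) be parametrized by x(t,v) = (1−v)t, y(t,v) = v, u(t,v) = (1−v)c(t), where c is analytic with c(0) = c'(0) = 0 and c''(0) =: c₂ ≠ 0. If near the origin the cone is the graph u = F(x,y), then F₁₀ = F₀₁ = 0, F₂₀ = c₂, F₁₁ = 0, F₀₂ = 0, F₃₀ = c₃, F₂₁ = c₂, F₃₁ = 2c₃, F₄₀ = c₄, where c_k := c^{(k)}(0) and F_{jk} := ∂^{j+k}F/∂x^j∂y^k at (0,0). Consequently the invariants evaluate to S := (F₂₀F₂₁ − F₁₁F₃₀)/F₂₀² = 1 and W := (2F₁₁F₃₀² + F₂₀²F₃₁ − 2F₂₀F₂₁F₃₀ − F₂₀F₁₁F₄₀)/(F₂₀²(F₂₀F₂₁ − F₁₁F₃₀)^{2/3}) = 0. -/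
open Filter Topology

/-- Near the origin, the cone `(t, v) ↦ ((1 - v) t, v, (1 - v) c(t))` is the graph of `F`. -/
def IsGraphOfCone (c : ℝ → ℝ) (F : ℝ × ℝ → ℝ) : Prop :=
  ∀ᶠ q : ℝ × ℝ in 𝓝 (0, 0), (1 - q.2) * c q.1 = F ((1 - q.2) * q.1, q.2)

section IsGraphOfCone

variable {c : ℝ → ℝ} {F : ℝ × ℝ → ℝ}

theorem IsGraphOfCone.eventually_pow_mul_iterate_pdx_eq (hcone : IsGraphOfCone c F) (k : ℕ) :
    ∀ᶠ q : ℝ × ℝ in 𝓝 (0, 0),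
      (1 - q.2) ^ k * pdx^[k] F ((1 - q.2) * q.1, q.2) = (1 - q.2) * deriv^[k] c q.1 := by
  induction k with
  | zero => exact hcone.mono fun q hq => by simpa using hq.symm
  | succ k ih =>
    filter_upwards [ih.eventually_nhds] with ⟨t, v⟩ hnear
    have hline : (fun s => (1 - v) ^ k * pdx^[k] F ((1 - v) * s, v))
        =ᶠ[𝓝 t] fun s => (1 - v) * deriv^[k] c s :=
      ((continuous_id.prodMk continuous_const).tendsto t).eventually hnear
    have hderiv := hline.deriv_eq
    rw [deriv_const_mul_field, deriv_const_mul_field,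
      deriv_comp_mul_left (1 - v) (fun x => pdx^[k] F (x, v))] at hderiv
    simp only [Function.iterate_succ_apply', pdx, smul_eq_mul] at hderiv ⊢
    linear_combination hderiv

theorem IsGraphOfCone.eventually_iterate_pdx_zero_eq (hcone : IsGraphOfCone c F) (k : ℕ) :
    ∀ᶠ v : ℝ in 𝓝 0, pdx^[k] F (0, v) = deriv^[k] c 0 * (1 - v) ^ (1 - k : ℤ) := by
  have haxis : Tendsto (fun v : ℝ => ((0 : ℝ), v)) (𝓝 0) (𝓝 (0, 0)) :=
    (continuous_const.prodMk continuous_id).tendsto 0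
  have hne : ∀ᶠ v : ℝ in 𝓝 0, 1 - v ≠ 0 :=
    (continuous_const.sub continuous_id).continuousAt.eventually_ne (by norm_num)
  filter_upwards [haxis.eventually (hcone.eventually_pow_mul_iterate_pdx_eq k), hne]
    with v hkey hv
  rw [zpow_sub₀ hv, zpow_one, zpow_natCast]
  field_simp
  simp only [mul_zero] at hkey
  linear_combination hkey

theorem IsGraphOfCone.iterate_pdx_apply_zero (hcone : IsGraphOfCone c F) (k : ℕ) :
    pdx^[k] F (0, 0) = deriv^[k] c 0 := by
  simpa using (hcone.eventually_iterate_pdx_zero_eq k).self_of_nhds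

theorem IsGraphOfCone.pdy_iterate_pdx_apply_zero (hcone : IsGraphOfCone c F) (k : ℕ) :
    pdy (pdx^[k] F) (0, 0) = (k - 1) * deriv^[k] c 0 := by
  have hpow : HasDerivAt (fun v : ℝ => (1 - v) ^ (1 - k : ℤ)) ((k : ℝ) - 1) 0 := by
    refine ((hasDerivAt_zpow (1 - k : ℤ) (1 - 0) (by norm_num)).comp 0
      ((hasDerivAt_id (0 : ℝ)).const_sub 1)).congr_deriv ?_
    simp only [sub_zero, one_zpow, Int.cast_sub, Int.cast_one, Int.cast_natCast]
    ring
  have haxis : (fun v => pdx^[k] F (0, v)) =ᶠ[𝓝 0]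
      fun v => deriv^[k] c 0 * (1 - v) ^ (1 - k : ℤ) :=
    hcone.eventually_iterate_pdx_zero_eq k
  calc pdy (pdx^[k] F) (0, 0) = deriv^[k] c 0 * ((k : ℝ) - 1) :=
        haxis.deriv_eq.trans (hpow.const_mul _).deriv
    _ = (k - 1) * deriv^[k] c 0 := mul_comm _ _

theorem IsGraphOfCone.pdy_pdy_apply_zero (hcone : IsGraphOfCone c F) :
    pdy (pdy F) (0, 0) = 0 := by
  have haxis : (fun v => F (0, v)) =ᶠ[𝓝 0] fun v => c 0 - c 0 * v := by
    filter_upwards [hcone.eventually_iterate_pdx_zero_eq 0] with v hv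
    simpa [mul_sub] using hv
  have hslope : (fun v => pdy F (0, v)) =ᶠ[𝓝 0] fun _ => -c 0 := by
    filter_upwards [haxis.deriv] with v hv
    simpa [pdy] using hv
  exact hslope.deriv_eq.trans (deriv_const 0 _)

end IsGraphOfCone

theorem cone_invariants_S_and_W_general
    (c : ℝ → ℝ)
    (hc0 : c 0 = 0) (hc1 : deriv c 0 = 0) (hc2 : deriv^[2] c 0 ≠ 0)
    (F : ℝ × ℝ → ℝ)
    (hfund : ∀ᶠ q : ℝ × ℝ in nhds ((0 : ℝ), (0 : ℝ)),
      (1 - q.2) * c q.1 = F ((1 - q.2) * q.1, q.2)) :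
    pdx F (0, 0) = 0 ∧ pdy F (0, 0) = 0
    ∧ pdx (pdx F) (0, 0) = deriv^[2] c 0
    ∧ pdy (pdx F) (0, 0) = 0
    ∧ pdy (pdy F) (0, 0) = 0
    ∧ pdx^[3] F (0, 0) = deriv^[3] c 0
    ∧ pdy (pdx (pdx F)) (0, 0) = deriv^[2] c 0
    ∧ pdy (pdx^[3] F) (0, 0) = 2 * deriv^[3] c 0
    ∧ pdx^[4] F (0, 0) = deriv^[4] c 0
    ∧ (let F20 := pdx (pdx F) (0, 0)
       let F11 := pdy (pdx F) (0, 0)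
       let F21 := pdy (pdx (pdx F)) (0, 0)
       let F30 := pdx^[3] F (0, 0)
       let F31 := pdy (pdx^[3] F) (0, 0)
       let F40 := pdx^[4] F (0, 0)
       (F20 * F21 - F11 * F30) / F20 ^ 2 = 1
       ∧ (2 * F11 * F30 ^ 2 + F20 ^ 2 * F31 - 2 * F20 * F21 * F30 - F20 * F11 * F40)
           / (F20 ^ 2 * ((F20 * F21 - F11 * F30) ^ 2) ^ ((1 : ℝ) / 3)) = 0) := by
  have hcone : IsGraphOfCone c F := hfund
  have h10 : pdx F (0, 0) = 0 := (hcone.iterate_pdx_apply_zero 1).trans hc1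
  have h01 : pdy F (0, 0) = 0 := by simpa [hc0] using hcone.pdy_iterate_pdx_apply_zero 0
  have h20 : pdx (pdx F) (0, 0) = deriv^[2] c 0 := hcone.iterate_pdx_apply_zero 2
  have h11 : pdy (pdx F) (0, 0) = 0 := by simpa using hcone.pdy_iterate_pdx_apply_zero 1
  have h30 : pdx^[3] F (0, 0) = deriv^[3] c 0 := hcone.iterate_pdx_apply_zero 3
  have h21 : pdy (pdx (pdx F)) (0, 0) = deriv^[2] c 0 := by
    refine (hcone.pdy_iterate_pdx_apply_zero 2).trans ?_; norm_num
  have h31 : pdy (pdx^[3] F) (0, 0) = 2 * deriv^[3] c 0 := by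
    rw [hcone.pdy_iterate_pdx_apply_zero 3]; norm_num
  refine ⟨h10, h01, h20, h11, hcone.pdy_pdy_apply_zero, h30, h21, h31,
    hcone.iterate_pdx_apply_zero 4, ?_, ?_⟩
  · rw [h20, h11, h21, h30, div_eq_one_iff_eq (pow_ne_zero 2 hc2)]
    ring
  · rw [h20, h11, h21, h30, h31]
    ring_nf

/-- For the normalized cone `x(t,v) = (1−v)t`, `y(t,v) = v`,
`u(t,v) = (1−v)c(t)` graphed near the origin as `u = F(x,y)`, the low order
Taylor coefficients of `F` at the origin are determined by those of `c`, and
consequently the invariants evaluate to `S = 1` and `W = 0`. Here the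
fractional power `(·)^{2/3}` is realized as the cube root of the square. -/
theorem cone_invariants_S_and_W
    (c : ℝ → ℝ) (hc : AnalyticAt ℝ c 0)
    (hc0 : c 0 = 0) (hc1 : deriv c 0 = 0) (hc2 : deriv^[2] c 0 ≠ 0)
    (F : ℝ × ℝ → ℝ) (hF : AnalyticAt ℝ F ((0 : ℝ), (0 : ℝ)))
    (hfund : ∀ᶠ q : ℝ × ℝ in nhds ((0 : ℝ), (0 : ℝ)),
      (1 - q.2) * c q.1 = F ((1 - q.2) * q.1, q.2)) :
    pdx F (0, 0) = 0 ∧ pdy F (0, 0) = 0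
    ∧ pdx (pdx F) (0, 0) = deriv^[2] c 0
    ∧ pdy (pdx F) (0, 0) = 0
    ∧ pdy (pdy F) (0, 0) = 0
    ∧ pdx^[3] F (0, 0) = deriv^[3] c 0
    ∧ pdy (pdx (pdx F)) (0, 0) = deriv^[2] c 0
    ∧ pdy (pdx^[3] F) (0, 0) = 2 * deriv^[3] c 0
    ∧ pdx^[4] F (0, 0) = deriv^[4] c 0
    ∧ (let F20 := pdx (pdx F) (0, 0)
       let F11 := pdy (pdx F) (0, 0)
       let F21 := pdy (pdx (pdx F)) (0, 0)
       let F30 := pdx^[3] F (0, 0)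
       let F31 := pdy (pdx^[3] F) (0, 0)
       let F40 := pdx^[4] F (0, 0)
       (F20 * F21 - F11 * F30) / F20 ^ 2 = 1
       ∧ (2 * F11 * F30 ^ 2 + F20 ^ 2 * F31 - 2 * F20 * F21 * F30 - F20 * F11 * F40)
           / (F20 ^ 2 * ((F20 * F21 - F11 * F30) ^ 2) ^ ((1 : ℝ) / 3)) = 0) :=
  cone_invariants_S_and_W_general c hc0 hc1 hc2 F hfund
end
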